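/- arXiv:2404.18985 — 3 statements merged into one kernel-verified Lean document; each statement's English description precedes it below -/
import Mathlib

section
/- Let n ≥ 1, let a₁,…,a_n and C be positive real numbers, let X ≥ 1 be real, and let p₁,…,p_n be real numbers. Suppose that for every i with 1 ≤ i ≤ n we have a_i² ≤ C · max_{1 ≤ j ≤ n} (X^{2p_i − p_j} · a_j). Then a_i ≤ C · X^{p_i} for every i. -/
open Finset

/-- If positive reals `a i` satisfy `a i ^ 2 ≤ C * max_j (X ^ (2 p i - p j) * a j)`
for all `i`, with `C > 0` and `X ≥ 1`, then `a i ≤ C * X ^ (p i)` for all `i`. -/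
theorem general_bound_lemma (n : ℕ) (hn : 1 ≤ n) (a p : Fin n → ℝ) (C X : ℝ)
    (ha : ∀ i, 0 < a i) (hC : 0 < C) (hX : 1 ≤ X)
    (h : ∀ i, (a i) ^ 2 ≤
      C * (Finset.univ.sup' (Finset.univ_nonempty_iff.mpr ⟨⟨0, hn⟩⟩)
        fun j => X ^ (2 * p i - p j) * a j)) :
    ∀ i, a i ≤ C * X ^ (p i) := by
  have hX0 : (0:ℝ) < X := lt_of_lt_of_le one_pos hX
  have ne : (Finset.univ : Finset (Fin n)).Nonempty := Finset.univ_nonempty_iff.mpr ⟨⟨0, hn⟩⟩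
  set M := Finset.univ.sup' ne (fun j => a j * X ^ (-p j)) with hM
  obtain ⟨j0, _, hj0⟩ := Finset.exists_mem_eq_sup' ne (fun j => a j * X ^ (-p j))
  have hMpos : 0 < M := by
    rw [hM, hj0]
    exact mul_pos (ha j0) (Real.rpow_pos_of_pos hX0 _)
  have hMle : ∀ j, a j * X ^ (-p j) ≤ M := fun j =>
    Finset.le_sup' (fun j => a j * X ^ (-p j)) (Finset.mem_univ j)
  have key : ∀ i, Finset.univ.sup' (Finset.univ_nonempty_iff.mpr ⟨⟨0, hn⟩⟩)
      (fun j => X ^ (2 * p i - p j) * a j) ≤ X ^ (2 * p i) * M := by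
    intro i
    apply Finset.sup'_le
    intro j _
    have : X ^ (2 * p i - p j) * a j = X ^ (2 * p i) * (a j * X ^ (-p j)) := by
      rw [Real.rpow_sub hX0, Real.rpow_neg hX0.le]
      ring
    rw [this]
    exact mul_le_mul_of_nonneg_left (hMle j) (Real.rpow_pos_of_pos hX0 _).le
  have hMC : M ≤ C := by
    have h1 := (h j0).trans (mul_le_mul_of_nonneg_left (key j0) hC.le)
    have ha0 : a j0 = M * X ^ (p j0) := by
      rw [hM, hj0, mul_assoc, ← Real.rpow_add hX0]
      simp
    rw [ha0] at h1
    have hx2 : X ^ (2 * p j0) = (X ^ (p j0)) ^ 2 := by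
      rw [← Real.rpow_natCast (X ^ (p j0)), ← Real.rpow_mul hX0.le]
      norm_num [mul_comm]
    rw [mul_pow, hx2] at h1
    have hxp : (0:ℝ) < (X ^ (p j0)) ^ 2 := pow_pos (Real.rpow_pos_of_pos hX0 _) 2
    have h2 : M * ((X ^ (p j0)) ^ 2 * M) ≤ C * ((X ^ (p j0)) ^ 2 * M) := by nlinarith [h1]
    exact le_of_mul_le_mul_right h2 (mul_pos hxp hMpos)
  intro i
  have := (hMle i).trans hMC
  have hxp : (0:ℝ) < X ^ (p i) := Real.rpow_pos_of_pos hX0 _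
  calc a i = a i * X ^ (-p i) * X ^ (p i) := by
        rw [mul_assoc, ← Real.rpow_add hX0]; simp
    _ ≤ C * X ^ (p i) := mul_le_mul_of_nonneg_right this hxp.le
end

section
/- Let R be a nondegenerate rank n ring, i.e., a commutative unital ring whose additive group is ℤⁿ with nonzero discriminant, and let σ₁,…,σ_n be its n ring homomorphisms into ℂ. Define |x|² = (1/n)·Σᵢ |σᵢ(x)|² for x ∈ R. Then for every nonzero x ∈ R, one has |x| ≥ 1/√n. -/
/-!
Distinct ring homomorphisms `R → ℂ` are linearly independent characters (Dedekind), so the matrix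
`M = (σᵢ bⱼ)` is invertible, and it conjugates multiplication by `x` into `diag (σᵢ x)`. Hence the
characteristic polynomial of `x`, which has integer coefficients, factors over `ℂ` as
`∏ᵢ (X - σᵢ x)`, and its lowest nonzero coefficient is a nonzero integer equal to `±` the product
of the nonzero `σᵢ x`. Since `M` is invertible and `x ≠ 0`, some `σᵢ x` is nonzero; so some
`|σᵢ x| ≥ 1`, whence `∑ᵢ |σᵢ x|² ≥ 1`.
-/

open Polynomial Matrix

namespace Polynomial

theorem trailingCoeff_map_of_injective {R S : Type*} [Semiring R] [Semiring S] {f : R →+* S}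
    (hf : Function.Injective f) (p : R[X]) : (p.map f).trailingCoeff = f p.trailingCoeff := by
  simp only [trailingCoeff, natTrailingDegree, trailingDegree, support_map_of_injective p hf,
    coeff_map]

theorem trailingCoeff_prod {ι R : Type*} [CommSemiring R] [NoZeroDivisors R] [Nontrivial R]
    (s : Finset ι) (f : ι → R[X]) :
    (∏ i ∈ s, f i).trailingCoeff = ∏ i ∈ s, (f i).trailingCoeff :=
  map_prod (⟨⟨trailingCoeff, trailingCoeff_eq_coeff_zero (by simp) |>.trans coeff_one_zero⟩,
    trailingCoeff_mul⟩ : R[X] →* R) f s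

theorem trailingCoeff_X_sub_C {R : Type*} [Ring R] [Nontrivial R] [DecidableEq R] (z : R) :
    (X - C z).trailingCoeff = if z = 0 then 1 else -z := by
  split_ifs with hz
  · simp [hz, trailingCoeff, natTrailingDegree_X]
  · rw [trailingCoeff_eq_coeff_zero] <;> simp [hz]

theorem exists_one_le_norm_of_map_eq_prod_X_sub_C {ι : Type*} [Fintype ι] {p : ℤ[X]}
    {z : ι → ℂ} (hp : p.map (Int.castRingHom ℂ) = ∏ i, (X - C (z i))) (hz : ∃ i, z i ≠ 0) :
    ∃ i, 1 ≤ ‖z i‖ := by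
  classical
  by_contra! hsmall
  obtain ⟨i₀, hi₀⟩ := hz
  have hp₀ : p ≠ 0 := by
    rintro rfl
    exact (monic_prod_of_monic _ _ fun i _ => monic_X_sub_C (z i)).ne_zero (by simpa using hp.symm)
  have htc : (p.trailingCoeff : ℂ) = ∏ i, (X - C (z i)).trailingCoeff := by
    rw [← trailingCoeff_prod, ← hp, trailingCoeff_map_of_injective (RingHom.injective_int _)]
    rfl
  have hle : ∀ i, ‖(X - C (z i)).trailingCoeff‖ ≤ 1 := fun i => by
    rw [trailingCoeff_X_sub_C]
    split_ifs <;> simp [(hsmall i).le]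
  have hlt : ‖(X - C (z i₀)).trailingCoeff‖ < 1 := by
    simpa [trailingCoeff_X_sub_C, hi₀] using hsmall i₀
  have hone : 1 ≤ ‖(p.trailingCoeff : ℂ)‖ := by
    rw [Complex.norm_intCast]
    exact_mod_cast Int.one_le_abs (trailingCoeff_nonzero_iff_nonzero.mpr hp₀)
  rw [htc, norm_prod, ← Finset.mul_prod_erase _ _ (Finset.mem_univ i₀)] at hone
  have hrest : ∏ i ∈ Finset.univ.erase i₀, ‖(X - C (z i)).trailingCoeff‖ ≤ 1 :=
    Finset.prod_le_one (fun _ _ => norm_nonneg _) fun i _ => hle i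
  exact hone.not_gt ((mul_le_of_le_one_right (norm_nonneg _) hrest).trans_lt hlt)

end Polynomial

namespace Module.Basis

variable {ι R K : Type*} [CommRing R]

section

variable (b : Basis ι ℤ R)

noncomputable def embeddingMatrix [CommRing K] (σ : ι → R →+* K) : Matrix ι ι K :=
  Matrix.of fun i j => σ i (b j)

@[simp]
theorem embeddingMatrix_apply [CommRing K] (σ : ι → R →+* K) (i j : ι) :
    b.embeddingMatrix σ i j = σ i (b j) :=
  rfl

variable [Fintype ι]

theorem embeddingMatrix_mulVec_repr [CommRing K] (σ : ι → R →+* K) (x : R) :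
    b.embeddingMatrix σ *ᵥ (fun j => (b.repr x j : K)) = fun i => σ i x := by
  ext i
  conv_rhs => rw [← b.sum_repr x]
  simp [mulVec, dotProduct, mul_comm]

theorem embeddingMatrix_mul_leftMulMatrix [DecidableEq ι] [CommRing K] (σ : ι → R →+* K)
    (x : R) :
    b.embeddingMatrix σ * (Algebra.leftMulMatrix b x).map (Int.cast : ℤ → K) =
      diagonal (fun i => σ i x) * b.embeddingMatrix σ := by
  ext i j
  have := congrFun (b.embeddingMatrix_mulVec_repr σ (x * b j)) i
  simp only [mulVec, dotProduct, embeddingMatrix_apply, map_mul] at this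
  rw [diagonal_mul, Matrix.mul_apply]
  simp only [embeddingMatrix_apply, Matrix.map_apply, Algebra.leftMulMatrix_eq_repr_mul, this]

theorem det_embeddingMatrix_ne_zero [DecidableEq ι] [Field K] {σ : ι → R →+* K}
    (hσ : Function.Injective σ) : (b.embeddingMatrix σ).det ≠ 0 := by
  rw [Ne, ← exists_vecMul_eq_zero_iff]
  rintro ⟨v, hv, hvM⟩
  have hσ' : Function.Injective fun i => (σ i : R →* K) :=
    fun i j h => hσ (RingHom.ext fun r => DFunLike.congr_fun h r)
  refine hv (funext <| Fintype.linearIndependent_iff.mp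
    ((linearIndependent_monoidHom R K).comp _ hσ') v ?_)
  ext y
  have := dotProduct_mulVec v (b.embeddingMatrix σ) (fun j => (b.repr y j : K))
  rw [b.embeddingMatrix_mulVec_repr, hvM, zero_dotProduct] at this
  simpa [dotProduct] using this

theorem charpoly_leftMulMatrix_map [DecidableEq ι] [Field K] {σ : ι → R →+* K}
    (hσ : Function.Injective σ) (x : R) :
    (Algebra.leftMulMatrix b x).charpoly.map (Int.castRingHom K) = ∏ i, (X - C (σ i x)) := by
  have hM : IsUnit (b.embeddingMatrix σ).det := (b.det_embeddingMatrix_ne_zero hσ).isUnit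
  rw [← charpoly_map, ← charpoly_diagonal,
    ← charpoly_units_conj (nonsingInvUnit (b.embeddingMatrix σ) hM)]
  simp [nonsingInvUnit, b.embeddingMatrix_mul_leftMulMatrix, Matrix.mul_assoc,
    mul_nonsing_inv _ hM]

end

theorem exists_ringHom_ne_zero [Fintype ι] [DecidableEq ι] [Field K] [CharZero K]
    (b : Basis ι ℤ R) {σ : ι → R →+* K} (hσ : Function.Injective σ) {x : R} (hx : x ≠ 0) :
    ∃ i, σ i x ≠ 0 := by
  by_contra! h
  have hrepr := eq_zero_of_mulVec_eq_zero (b.det_embeddingMatrix_ne_zero hσ)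
    ((b.embeddingMatrix_mulVec_repr σ x).trans (funext h))
  exact hx (b.repr.map_eq_zero_iff.mp (Finsupp.ext fun j => by simpa using congrFun hrepr j))

theorem exists_one_le_norm_ringHom [Fintype ι] (b : Basis ι ℤ R) {σ : ι → R →+* ℂ}
    (hσ : Function.Injective σ) {x : R} (hx : x ≠ 0) : ∃ i, 1 ≤ ‖σ i x‖ := by
  classical
  exact exists_one_le_norm_of_map_eq_prod_X_sub_C (b.charpoly_leftMulMatrix_map hσ x)
    (b.exists_ringHom_ne_zero hσ hx)

end Module.Basis

theorem lambda_zero_lower_bound_general {R : Type*} [CommRing R] (n : ℕ)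
    (b : Module.Basis (Fin n) ℤ R)
    (σ : Fin n → (R →+* ℂ))
    (hσinj : Function.Injective σ)
    (x : R) (hx : x ≠ 0) :
    (1 : ℝ) / Real.sqrt n ≤ Real.sqrt ((1 / n) * ∑ i, ‖σ i x‖ ^ 2) := by
  obtain ⟨i, hi⟩ := b.exists_one_le_norm_ringHom hσinj hx
  have hsum : 1 ≤ ∑ i, ‖σ i x‖ ^ 2 := (one_le_pow₀ hi).trans
    (Finset.single_le_sum (fun j _ => sq_nonneg ‖σ j x‖) (Finset.mem_univ i))
  rw [one_div, ← Real.sqrt_inv, ← one_div]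
  exact Real.sqrt_le_sqrt (le_mul_of_one_le_right (by positivity) hsum)

/-- Let `R` be a nondegenerate rank `n` ring (commutative ring whose additive group is `ℤⁿ`,
with nonzero discriminant), and let `σ 1, …, σ n` be its `n` ring homomorphisms into `ℂ`.
With `|x|² = (1/n) Σ |σᵢ x|²`, every nonzero `x ∈ R` satisfies `|x| ≥ 1/√n`. -/
theorem lambda_zero_lower_bound {R : Type*} [CommRing R] (n : ℕ) (hn : 0 < n)
    (b : Module.Basis (Fin n) ℤ R)
    (hdisc : (Matrix.of fun i j : Fin n =>
        LinearMap.trace ℤ R (LinearMap.mulLeft ℤ (b i * b j))).det ≠ 0)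
    (σ : Fin n → (R →+* ℂ))
    (hσinj : Function.Injective σ)
    (hσall : ∀ φ : R →+* ℂ, ∃ i, φ = σ i)
    (x : R) (hx : x ≠ 0) :
    (1 : ℝ) / Real.sqrt n ≤ Real.sqrt ((1 / n) * ∑ i, ‖σ i x‖ ^ 2) :=
  lambda_zero_lower_bound_general n b σ hσinj x hx
end

section
/- Let f ∈ ℤ[x,y] be the binary cubic form a x³ + b x² y + c x y² + d y³ and let R_f be the cubic ring with basis 1, ω, θ and multiplication ωθ = −ad, ω² = −ac + bω − aθ, θ² = −bd + dω − cθ. Then this multiplication table is associative and commutative, i.e., it defines a commutative ring structure on ℤ³; equivalently, (ω·ω)·θ = ω·(ω·θ), (θ·θ)·ω = θ·(θ·ω), and (ω·θ)·ω = ω·(θ·ω) hold when products are expanded via the table. -/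
/-- Multiplication on `ℤ³` (coordinates with respect to the basis `1, ω, θ`) given by the
Delone–Faddeev table `ωθ = −ad`, `ω² = −ac + bω − aθ`, `θ² = −bd + dω − cθ` for the binary
cubic form `a x³ + b x² y + c x y² + d y³`. -/
def dfMul (a b c d : ℤ) (x y : ℤ × ℤ × ℤ) : ℤ × ℤ × ℤ :=
  (x.1 * y.1 - a * c * (x.2.1 * y.2.1) - a * d * (x.2.1 * y.2.2 + x.2.2 * y.2.1)
      - b * d * (x.2.2 * y.2.2),
   x.1 * y.2.1 + x.2.1 * y.1 + b * (x.2.1 * y.2.1) + d * (x.2.2 * y.2.2),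
   x.1 * y.2.2 + x.2.2 * y.1 - a * (x.2.1 * y.2.1) - c * (x.2.2 * y.2.2))

/-- The Delone–Faddeev multiplication table is associative, commutative, and unital, i.e.
it defines a commutative ring structure on `ℤ³`. -/
theorem dfMul_comm_ring (a b c d : ℤ) :
    (∀ x y z : ℤ × ℤ × ℤ,
        dfMul a b c d (dfMul a b c d x y) z = dfMul a b c d x (dfMul a b c d y z)) ∧
    (∀ x y : ℤ × ℤ × ℤ, dfMul a b c d x y = dfMul a b c d y x) ∧
    (∀ x : ℤ × ℤ × ℤ, dfMul a b c d (1, 0, 0) x = x) := by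
  refine ⟨fun x y z => ?_, fun x y => ?_, fun x => ?_⟩ <;>
    simp only [dfMul, Prod.ext_iff] <;> refine ⟨by ring, by ring, by ring⟩
end
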